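/- The ≡_2-class of the binary string rbrbr is exactly {r b r^p b r : p ≥ 1}, and the string rbrb lies in a singleton ≡_2-class. -/

import Mathlib

/-- A coloured linear order: a linear order together with a colouring map into `C`. -/
structure CLO (C : Type) where
  carrier : Type
  [ord : LinearOrder carrier]
  colour : carrier → C

attribute [instance] CLO.ord

namespace CLO

variable {C : Type}

/-- Induced coloured suborder on a subset. -/
def sub (A : CLO C) (s : Set A.carrier) : CLO C where
  carrier := ↥s
  colour := fun x => A.colour x.val

/-- The coloured suborder `A^{<a}`. -/
def left (A : CLO C) (a : A.carrier) : CLO C := A.sub {x | x < a}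

/-- The coloured suborder `A^{>a}`. -/
def right (A : CLO C) (a : A.carrier) : CLO C := A.sub {x | a < x}

/-- `n`-move Ehrenfeucht–Fraïssé equivalence of coloured linear orders, via the standard
back-and-forth characterization for linear orders. -/
def EFEquiv : ℕ → CLO C → CLO C → Prop
  | 0, _, _ => True
  | n + 1, A, B =>
      (∀ a : A.carrier, ∃ b : B.carrier, A.colour a = B.colour b ∧
        EFEquiv n (A.left a) (B.left b) ∧ EFEquiv n (A.right a) (B.right b)) ∧
      (∀ b : B.carrier, ∃ a : A.carrier, A.colour a = B.colour b ∧
        EFEquiv n (A.left a) (B.left b) ∧ EFEquiv n (A.right a) (B.right b))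

/-- `a` and `b` realize the same `n`-character (including the colour) in `A`. -/
def SameChar (n : ℕ) (A : CLO C) (a b : A.carrier) : Prop :=
  A.colour a = A.colour b ∧ EFEquiv n (A.left a) (A.left b) ∧
    EFEquiv n (A.right a) (A.right b)

/-- The finite coloured linear order (string) given by a list. -/
def ofList (l : List C) : CLO C where
  carrier := Fin l.length
  colour := l.get

/-- `A` is `≡ₙ`-optimal: no strictly shorter coloured linear order is `n`-equivalent to it. -/
def Optimal (n : ℕ) (A : CLO C) : Prop :=
  ∀ B : CLO C, Finite B.carrier → EFEquiv n A B → Nat.card A.carrier ≤ Nat.card B.carrier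

end CLO

/-!
Two strings are `≡₂`-equivalent iff they realize the same 1-characters `(L, c, R)`: the letter
`c` of a position together with the sets `L`, `R` of letters strictly to its left and right. A
letter occurring on both sides of a position can be inserted there while adding only the
character of the new position, which already occurs as that of its neighbour; so all the
strings `r b r^p b r` with `p ≥ 1` share the characters of `rbrbr`. Conversely, a string with
the characters of `rbrbr` realizes `({r,b}, r, {r,b})`, splitting it as `x r y` with both
letters in `x` and in `y`. Each position of `x` then has right set `{r,b}`, and the characters
of `rbrbr` with that right set force `x = r b r^a`; as `rbrbr` is a palindrome, the same
argument on the reversed string gives `y = r^b b r`. For `rbrb` the character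
`({r,b}, r, {b})` splits the string as `x r y` in the same way; now `x = r b` because no
character of `rbrb` has both sides `{r,b}`, and `y = b` because its only character
`({r,b}, b, R)` has `R = ∅`.
-/

theorem Set.range_eq_range_iff {ι κ β : Type*} {f : ι → β} {g : κ → β} :
    Set.range f = Set.range g ↔ (∀ i, ∃ k, f i = g k) ∧ ∀ k, ∃ i, f i = g k := by
  simp only [Set.Subset.antisymm_iff, Set.range_subset_iff, Set.mem_range]
  exact and_congr (forall_congr' fun _ => exists_congr fun _ => eq_comm) Iff.rfl

namespace List

theorem image_get_Iio {α : Type} (l : List α) (i : Fin l.length) :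
    l.get '' Set.Iio i = {a | a ∈ l.take i} := by
  ext a
  simp only [Set.mem_image, Set.mem_Iio, Set.mem_ofPred_eq, mem_take_iff_getElem, Fin.exists_iff,
    Fin.lt_def, get_eq_getElem]
  constructor
  · rintro ⟨j, hj, hji, rfl⟩
    exact ⟨j, by omega, rfl⟩
  · rintro ⟨j, hj, rfl⟩
    exact ⟨j, by omega, by omega, rfl⟩

theorem image_get_Ioi {α : Type} (l : List α) (i : Fin l.length) :
    l.get '' Set.Ioi i = {a | a ∈ l.drop (i + 1)} := by
  ext a
  simp only [Set.mem_image, Set.mem_Ioi, Set.mem_ofPred_eq, mem_drop_iff_getElem, Fin.exists_iff,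
    Fin.lt_def, get_eq_getElem]
  constructor
  · rintro ⟨j, hj, hij, rfl⟩
    exact ⟨j - (i + 1), by omega, by congr 1; omega⟩
  · rintro ⟨k, hk, rfl⟩
    exact ⟨i + 1 + k, by omega, by omega, rfl⟩

section Characters

variable {α : Type} [DecidableEq α]

def characters (l : List α) : Finset (Finset α × α × Finset α) :=
  Finset.univ.image fun i : Fin l.length =>
    ((l.take i).toFinset, l[i], (l.drop (i + 1)).toFinset)

theorem mem_characters {l : List α} {t : Finset α × α × Finset α} :
    t ∈ characters l ↔ ∃ x c y, l = x ++ c :: y ∧ t = (x.toFinset, c, y.toFinset) := by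
  simp only [characters, Finset.mem_image, Finset.mem_univ, true_and]
  constructor
  · rintro ⟨i, rfl⟩
    exact ⟨_, _, _, by rw [Fin.getElem_fin, ← drop_eq_getElem_cons, take_append_drop], rfl⟩
  · rintro ⟨x, c, y, rfl, rfl⟩
    exact ⟨⟨x.length, by simp⟩, by simp⟩

theorem characters_reverse (l : List α) :
    characters l.reverse = (characters l).image fun t => (t.2.2, t.2.1, t.1) := by
  ext t
  simp only [mem_characters, Finset.mem_image]
  constructor
  · rintro ⟨x, c, y, hl, rfl⟩
    refine ⟨_, ⟨y.reverse, c, x.reverse, ?_, rfl⟩, by simp⟩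
    simpa using congrArg reverse hl
  · rintro ⟨_, ⟨x, c, y, rfl, rfl⟩, rfl⟩
    exact ⟨y.reverse, c, x.reverse, by simp, by simp⟩

theorem toFinset_append_cons_of_mem {x y : List α} {c : α} (h : c ∈ x ++ y) :
    (x ++ c :: y).toFinset = (x ++ y).toFinset := by
  rw [toFinset_eq_of_perm _ _ perm_middle, toFinset_cons,
    Finset.insert_eq_of_mem (mem_toFinset.2 h)]

theorem characters_append_cons_of_mem {x y : List α} {c : α} (hx : c ∈ x) (hy : c ∈ y) :
    characters (x ++ c :: y) = insert (x.toFinset, c, y.toFinset) (characters (x ++ y)) := by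
  ext t
  simp only [Finset.mem_insert, mem_characters]
  constructor
  · rintro ⟨u, d, v, h, rfl⟩
    rcases append_eq_append_iff.1 h with ⟨_ | ⟨e, as⟩, rfl, hs⟩ | ⟨_ | ⟨e, bs⟩, rfl, hs⟩
    · obtain ⟨rfl, rfl⟩ : c = d ∧ y = v := by simpa using hs
      simp
    · obtain ⟨rfl, rfl⟩ : c = e ∧ y = as ++ d :: v := by simpa using hs
      exact .inr ⟨x ++ as, d, v, by simp, by rw [toFinset_append_cons_of_mem (by simp [hx])]⟩
    · obtain ⟨rfl, rfl⟩ : d = c ∧ v = y := by simpa [eq_comm] using hs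
      simp
    · obtain ⟨rfl, rfl⟩ : d = e ∧ v = bs ++ c :: y := by simpa using hs
      exact .inr ⟨u, d, bs ++ y, by simp, by rw [toFinset_append_cons_of_mem (by simp [hy])]⟩
  · rintro (rfl | ⟨u, d, v, h, rfl⟩)
    · exact ⟨x, c, y, rfl, rfl⟩
    rcases append_eq_append_iff.1 h with ⟨as, rfl, rfl⟩ | ⟨_ | ⟨e, bs⟩, rfl, hs⟩
    · exact ⟨x ++ c :: as, d, v, by simp, by rw [toFinset_append_cons_of_mem (by simp [hx])]⟩
    · obtain rfl : y = d :: v := by simpa using hs.symm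
      refine ⟨u ++ [c], d, v, by simp, ?_⟩
      rw [toFinset_append_cons_of_mem (x := u) (y := []) (by simpa using hx), append_nil]
    · obtain ⟨rfl, rfl⟩ : d = e ∧ v = bs ++ y := by simpa using hs
      exact ⟨u, d, bs ++ c :: y, by simp, by rw [toFinset_append_cons_of_mem (by simp [hy])]⟩

theorem characters_append_cons_cons {x y : List α} {c : α} (hx : c ∈ x) (hy : c ∈ y) :
    characters (x ++ c :: c :: y) = characters (x ++ c :: y) := by
  rw [characters_append_cons_of_mem hx (mem_cons_self ..), toFinset_cons,
    Finset.insert_eq_of_mem (mem_toFinset.2 hy),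
    Finset.insert_eq_of_mem (mem_characters.2 ⟨x, c, y, rfl, rfl⟩)]

end Characters

end List

namespace CLO

variable {C : Type}

def oneChar (A : CLO C) (a : A.carrier) : Set C × C × Set C :=
  (A.colour '' Set.Iio a, A.colour a, A.colour '' Set.Ioi a)

theorem range_colour_sub (A : CLO C) (s : Set A.carrier) :
    Set.range (A.sub s).colour = A.colour '' s := by
  change Set.range (A.colour ∘ Subtype.val) = _
  rw [Set.range_comp, Subtype.range_coe]

theorem efEquiv_one_iff {A B : CLO C} :
    EFEquiv 1 A B ↔ Set.range A.colour = Set.range B.colour := by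
  simp only [EFEquiv, and_true]
  exact Set.range_eq_range_iff.symm

theorem efEquiv_two_iff {A B : CLO C} :
    EFEquiv 2 A B ↔ Set.range A.oneChar = Set.range B.oneChar := by
  rw [EFEquiv, Set.range_eq_range_iff]
  simp only [efEquiv_one_iff, left, right, range_colour_sub, oneChar, Prod.ext_iff]
  simp only [and_left_comm (a := A.colour _ = _)]
  rfl

theorem range_oneChar_ofList [DecidableEq C] (l : List C) :
    Set.range (ofList l).oneChar =
      Prod.map (↑) (Prod.map id (↑)) '' (l.characters : Set (Finset C × C × Finset C)) := by
  rw [List.characters, Finset.coe_image, Finset.coe_univ, Set.image_univ, ← Set.range_comp]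
  congr 1
  funext (i : Fin l.length)
  change (l.get '' Set.Iio i, l.get i, l.get '' Set.Ioi i) = _
  rw [List.image_get_Iio, List.image_get_Ioi]
  simp

theorem efEquiv_two_ofList_iff [DecidableEq C] {l m : List C} :
    EFEquiv 2 (ofList l) (ofList m) ↔ l.characters = m.characters := by
  have hinj : Function.Injective
      (Prod.map (↑) (Prod.map id (↑)) : Finset C × C × Finset C → Set C × C × Set C) :=
    Finset.coe_injective.prodMap (Function.injective_id.prodMap Finset.coe_injective)
  rw [efEquiv_two_iff, range_oneChar_ofList, range_oneChar_ofList,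
    (Set.image_injective.2 hinj).eq_iff, Finset.coe_inj]

end CLO

namespace List

open Finset

theorem toFinset_true_false_cons (u : List Bool) : (true :: false :: u).toFinset = univ :=
  eq_univ_of_forall fun b => by cases b <;> simp

theorem exists_eq_true_false_cons_of_characters_subset {x z : List Bool}
    {S : Finset (Finset Bool × Bool × Finset Bool)} (hS : characters (x ++ z) ⊆ S)
    (hx : x.toFinset = univ) (hz : z.toFinset = univ)
    (h₀ : ∀ c, (∅, c, univ) ∈ S → c = true) (h₁ : ∀ c, ({true}, c, univ) ∈ S → c = false) :
    ∃ w, x = true :: false :: w ∧ ∀ c ∈ w, (univ, c, univ) ∈ S := by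
  have split : ∀ u c v, x = u ++ c :: v → (u.toFinset, c, univ) ∈ S := by
    rintro u c v rfl
    refine hS (mem_characters.2 ⟨u, c, v ++ z, by simp, ?_⟩)
    rw [toFinset_append, hz, union_eq_right.2 (subset_univ _)]
  obtain _ | ⟨c₀, _ | ⟨c₁, w⟩⟩ := x
  · exact absurd hx (by decide)
  · exact absurd hx (by cases c₀ <;> decide)
  obtain rfl := h₀ c₀ (split [] c₀ (c₁ :: w) rfl)
  obtain rfl := h₁ c₁ (split [true] c₁ w rfl)
  refine ⟨w, rfl, fun c hc => ?_⟩
  obtain ⟨u, v, rfl⟩ := append_of_mem hc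
  have := split (true :: false :: u) c v rfl
  rwa [toFinset_true_false_cons] at this

theorem exists_eq_true_false_replicate_of_characters_eq {x z : List Bool}
    (h : characters (x ++ z) = characters [true, false, true, false, true])
    (hx : x.toFinset = univ) (hz : z.toFinset = univ) :
    ∃ a, x = true :: false :: replicate a true := by
  obtain ⟨w, rfl, hw⟩ :=
    exists_eq_true_false_cons_of_characters_subset h.subset hx hz (by decide) (by decide)
  have hmid : ∀ c, (univ, c, univ) ∈ characters [true, false, true, false, true] → c = true := by
    decide
  exact ⟨w.length, by congr 2; exact eq_replicate_iff.2 ⟨rfl, fun c hc => hmid c (hw c hc)⟩⟩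

theorem eq_rbrpbr_of_characters_eq {m : List Bool}
    (h : characters m = characters [true, false, true, false, true]) :
    ∃ p, 1 ≤ p ∧ m = [true, false] ++ replicate p true ++ [false, true] := by
  obtain ⟨x, c, y, rfl, hxy⟩ := mem_characters.1
    (h ▸ (by decide : (univ, true, univ) ∈ characters [true, false, true, false, true]))
  obtain ⟨hx, hcy⟩ := Prod.mk.inj hxy
  obtain ⟨rfl, hy⟩ := Prod.mk.inj hcy
  have hrev : characters (y.reverse ++ true :: x.reverse) =
      characters [true, false, true, false, true] := by
    rw [show y.reverse ++ true :: x.reverse = (x ++ true :: y).reverse by simp,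
      characters_reverse, h, ← characters_reverse]
    rfl
  obtain ⟨b, hb⟩ := exists_eq_true_false_replicate_of_characters_eq hrev
    (by rw [toFinset_reverse, hy])
    (by rw [toFinset_cons, toFinset_reverse, ← hx, insert_eq_of_mem (mem_univ _)])
  obtain ⟨a, rfl⟩ := exists_eq_true_false_replicate_of_characters_eq h hx.symm
    (by rw [toFinset_cons, ← hy, insert_eq_of_mem (mem_univ _)])
  rw [← reverse_reverse y, hb]
  refine ⟨a + 1 + b, by omega, ?_⟩
  simp [replicate_add]

theorem characters_rbrpbr (p : ℕ) :
    characters ([true, false] ++ replicate (p + 1) true ++ [false, true]) =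
      characters [true, false, true, false, true] := by
  induction p with
  | zero => rfl
  | succ p ih =>
    rw [← ih]
    simpa [replicate_succ] using characters_append_cons_cons (x := [true, false])
      (y := replicate p true ++ [false, true]) (by simp) (by simp)

theorem eq_rbrb_of_characters_eq {m : List Bool}
    (h : characters m = characters [true, false, true, false]) :
    m = [true, false, true, false] := by
  obtain ⟨x, c, y, rfl, hxy⟩ := mem_characters.1
    (h ▸ (by decide : (univ, true, {false}) ∈ characters [true, false, true, false]))
  obtain ⟨hx, hcy⟩ := Prod.mk.inj hxy
  obtain ⟨rfl, hy⟩ := Prod.mk.inj hcy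
  obtain ⟨w, rfl, hw⟩ := exists_eq_true_false_cons_of_characters_subset h.subset hx.symm
    (by rw [toFinset_cons, ← hy]; decide) (by decide) (by decide)
  have hnomid : ∀ c, (univ, c, univ) ∉ characters [true, false, true, false] := by decide
  obtain rfl : w = [] := eq_nil_iff_forall_not_mem.2 fun c hc => hnomid c (hw c hc)
  obtain _ | ⟨c, v⟩ := y
  · exact absurd hy (by decide)
  obtain rfl : c = false := by simpa [← hy] using mem_toFinset.2 (mem_cons_self (a := c) (l := v))
  have hlast : ∀ R, (univ, false, R) ∈ characters [true, false, true, false] → R = ∅ := by decide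
  have hv := hlast v.toFinset (h ▸ mem_characters.2 ⟨[true, false, true], false, v, rfl, by
    rw [show [true, false, true].toFinset = univ by decide]⟩)
  rw [toFinset_eq_empty_iff] at hv
  rw [hv]
  rfl

end List

/-- with `r = true`, `b = false`, the `≡₂`-class of `rbrbr` is exactly
`{r b r^p b r : p ≥ 1}`, and `rbrb` lies in a singleton `≡₂`-class. -/
theorem stmt19 :
    ({l : List Bool |
        CLO.EFEquiv 2 (CLO.ofList [true, false, true, false, true]) (CLO.ofList l)} =
      {l : List Bool | ∃ p : ℕ, 1 ≤ p ∧
        l = [true, false] ++ List.replicate p true ++ [false, true]}) ∧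
    ({l : List Bool |
        CLO.EFEquiv 2 (CLO.ofList [true, false, true, false]) (CLO.ofList l)} =
      {[true, false, true, false]}) := by
  refine ⟨Set.ext fun l => ?_, Set.ext fun l => ?_⟩
  · simp only [Set.mem_ofPred_eq, CLO.efEquiv_two_ofList_iff]
    refine ⟨fun h => List.eq_rbrpbr_of_characters_eq h.symm, ?_⟩
    rintro ⟨p, hp, rfl⟩
    obtain ⟨p, rfl⟩ := Nat.exists_eq_add_of_le' hp
    exact (List.characters_rbrpbr p).symm
  · simp only [Set.mem_ofPred_eq, Set.mem_singleton_iff, CLO.efEquiv_two_ofList_iff]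
    exact ⟨fun h => List.eq_rbrb_of_characters_eq h.symm, fun h => h ▸ rfl⟩
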